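/- arXiv:0907.3951 — 10 statements merged into one kernel-verified Lean document; each statement's English description precedes it below -/
import Mathlib

section
/- Let (G,*) be a group, k ≥ 1 and 1 ≤ m ≤ k. Suppose f_n : G^{k+1} → G (n ≥ 0), h : G^{k−m+1} → G and g_n : G^m → G (n ≥ 0) satisfy the semiconjugacy identity f_n(u_0,…,u_k) * h(u_0,…,u_{k−m}) = g_n(u_0 * h(u_1,…,u_{k−m+1}), u_1 * h(u_2,…,u_{k−m+2}), …, u_{m−1} * h(u_m,…,u_k)) for all u_0,…,u_k ∈ G and all n ≥ 0. If {x_n}_{n ≥ −k} is a solution of the difference equation x_{n+1} = f_n(x_n, x_{n−1}, …, x_{n−k}) and t_n := x_n * h(x_{n−1}, x_{n−2}, …, x_{n−k+m−1}) for n ≥ −m+1, then for every n ≥ 0 both t_{n+1} = g_n(t_n, t_{n−1}, …, t_{n−m+1}) (the factor equation) and x_{n+1} = t_{n+1} * [h(x_n, x_{n−1}, …, x_{n−k+m})]^{-1} (the cofactor equation) hold. -/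
/-- If the semiconjugacy identity holds and `x` is a solution of the
difference equation `x_{n+1} = f_n(x_n, …, x_{n-k})`, then with
`t_n = x_n * h(x_{n-1}, …, x_{n-k+m-1})` both the factor equation and the cofactor
equation hold for every `n ≥ 0`. -/
theorem stmt_0 {G : Type*} [Group G] (k m : ℕ) (hk : 1 ≤ k) (hm1 : 1 ≤ m) (hmk : m ≤ k)
    (f : ℕ → (Fin (k + 1) → G) → G)
    (h : (Fin (k - m + 1) → G) → G)
    (g : ℕ → (Fin m → G) → G)
    (hsc : ∀ (n : ℕ) (u : Fin (k + 1) → G),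
      f n u * h (fun i => u ⟨i.val, by have := i.isLt; omega⟩) =
        g n (fun j => u ⟨j.val, by have := j.isLt; omega⟩ *
          h (fun i => u ⟨j.val + 1 + i.val, by have := i.isLt; have := j.isLt; omega⟩)))
    (x : ℤ → G)
    (hx : ∀ n : ℕ, x ((n : ℤ) + 1) = f n (fun i => x ((n : ℤ) - i.val)))
    (t : ℤ → G)
    (ht : ∀ n : ℤ, -(m : ℤ) + 1 ≤ n → t n = x n * h (fun i => x (n - 1 - i.val))) :
    ∀ n : ℕ,
      t ((n : ℤ) + 1) = g n (fun j => t ((n : ℤ) - j.val)) ∧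
      x ((n : ℤ) + 1) = t ((n : ℤ) + 1) * (h (fun i => x ((n : ℤ) - i.val)))⁻¹ := by
  intro n
  have key := hsc n (fun i => x ((n : ℤ) - i.val))
  have hxn := hx n
  have ht1 : t ((n : ℤ) + 1) = x ((n : ℤ) + 1) * h (fun i => x ((n : ℤ) - i.val)) := by
    rw [ht ((n : ℤ) + 1) (by omega)]
    refine congrArg (x ((n : ℤ) + 1) * ·) (congrArg h (funext fun i => ?_))
    congr 1
    push_cast
    ring
  refine ⟨?_, by rw [ht1]; group⟩
  rw [ht1, hxn]
  simp only at key
  rw [key]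
  congr 1
  funext j
  rw [ht ((n : ℤ) - j.val) (by have := j.isLt; omega)]
  refine congrArg (x ((n : ℤ) - j.val) * ·) (congrArg h (funext fun i => ?_))
  congr 1
  push_cast
  ring
end

section
/- (Invertibility criterion.) Let (G,*) be a group, k ≥ 1, h : G → G a bijection, and f_n : G^{k+1} → G for n ≥ 0. For u_0, v_1, …, v_k ∈ G define ζ_0 = u_0 and ζ_j = h^{-1}(ζ_{j−1}^{-1} * v_j) for j = 1,…,k (where h^{-1} denotes the inverse function of h and ^{-1} on elements denotes group inversion; each ζ_j depends on u_0 and v_1,…,v_j). Then there exist functions g_n : G^k → G satisfying f_n(u_0, u_1, …, u_k) * h(u_0) = g_n(u_0 * h(u_1), u_1 * h(u_2), …, u_{k−1} * h(u_k)) for all u_0,…,u_k ∈ G and all n, if and only if for every n and all v_1,…,v_k ∈ G the quantity f_n(u_0, ζ_1, …, ζ_k) * h(u_0) is independent of u_0, i.e. takes the same value for all u_0 ∈ G. -/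
/-- The sequence `ζ_0 = u_0`, `ζ_j = h⁻¹(ζ_{j-1}⁻¹ * v_j)`, where `hinv` is the inverse
function of `h` and `⁻¹` on elements is group inversion. -/
def zetaInv {G : Type*} [Group G] (hinv : G → G) (u0 : G) (v : ℕ → G) : ℕ → G
  | 0 => u0
  | j + 1 => hinv ((zetaInv hinv u0 v j)⁻¹ * v (j + 1))

/-- **Invertibility criterion.** For a bijection `h : G → G`, the
difference equation with functions `f_n` has the form symmetry
`H(u_0,…,u_k) = (u_0 * h(u_1), …, u_{k-1} * h(u_k))` with semiconjugate factors `g_n`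
if and only if `f_n(u_0, ζ_1, …, ζ_k) * h(u_0)` is independent of `u_0`. -/
theorem stmt_4 {G : Type*} [Group G] (k : ℕ) (hk : 1 ≤ k)
    (h : G → G) (hbij : Function.Bijective h)
    (f : ℕ → (Fin (k + 1) → G) → G) :
    (∃ g : ℕ → (Fin k → G) → G, ∀ (n : ℕ) (u : Fin (k + 1) → G),
        f n u * h (u 0) = g n (fun j => u j.castSucc * h (u j.succ)))
    ↔ ∀ (n : ℕ) (v : ℕ → G) (u0 u0' : G),
        f n (fun i => zetaInv (Function.invFun h) u0 v i.val) * h u0 =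
        f n (fun i => zetaInv (Function.invFun h) u0' v i.val) * h u0' := by
  set hinv := Function.invFun h with hinv_def
  have hright : ∀ x, h (hinv x) = x := fun x =>
    Function.rightInverse_invFun hbij.2 x
  have hleft : ∀ x, hinv (h x) = x := fun x =>
    Function.leftInverse_invFun hbij.1 x
  constructor
  · rintro ⟨g, hg⟩ n v u0 u0'
    -- both sides equal `g n (fun j => v (j+1))`
    have key : ∀ w0 : G,
        f n (fun i => zetaInv hinv w0 v i.val) * h w0 = g n (fun j => v (j.val + 1)) := by
      intro w0
      have := hg n (fun i => zetaInv hinv w0 v i.val)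
      simp only [show (zetaInv hinv w0 v (0 : Fin (k+1)).val) = w0 from rfl] at this
      rw [this]
      congr 1
      funext j
      have hcs : (j.castSucc : Fin (k+1)).val = j.val := rfl
      have hs : (j.succ : Fin (k+1)).val = j.val + 1 := rfl
      rw [hcs, hs]
      show zetaInv hinv w0 v j.val * h (zetaInv hinv w0 v (j.val + 1)) = v (j.val + 1)
      rw [zetaInv, hright]
      group
    rw [key u0, key u0']
  · intro hcrit
    -- define v from a tuple w : Fin k → G
    classical
    set vOf : (Fin k → G) → ℕ → G := fun w j =>
      if hj : 1 ≤ j ∧ j ≤ k then w ⟨j - 1, by omega⟩ else 1 with vOf_def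
    refine ⟨fun n w => f n (fun i => zetaInv hinv 1 (vOf w) i.val) * h 1, fun n u => ?_⟩
    set w : Fin k → G := fun j => u j.castSucc * h (u j.succ) with w_def
    -- claim: zetaInv hinv (u 0) (vOf w) j = u j for j ≤ k
    have claim : ∀ j : ℕ, (hj : j ≤ k) → zetaInv hinv (u 0) (vOf w) j = u ⟨j, by omega⟩ := by
      intro j
      induction j with
      | zero => intro _; rfl
      | succ j ih =>
        intro hj
        have hjk : j ≤ k := by omega
        rw [zetaInv, ih hjk]
        have hv : vOf w (j + 1) = w ⟨j, by omega⟩ := by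
          rw [vOf_def]
          simp only [show (1 ≤ j + 1 ∧ j + 1 ≤ k) from ⟨by omega, hj⟩]
          simp
        rw [hv, w_def]
        have hcs : ((⟨j, by omega⟩ : Fin k).castSucc : Fin (k+1)) = ⟨j, by omega⟩ := rfl
        have hs : ((⟨j, by omega⟩ : Fin k).succ : Fin (k+1)) = ⟨j + 1, by omega⟩ := rfl
        simp only [hcs, hs]
        rw [inv_mul_cancel_left, hleft]
    have hfu : (fun i : Fin (k+1) => zetaInv hinv (u 0) (vOf w) i.val) = u := by
      funext i
      rw [claim i.val (by omega)]
    have := hcrit n (vOf w) (u 0) 1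
    rw [hfu] at this
    exact this
end

section
/- Let (G,*) be a group, k ≥ 1, and f_n : G^{k+1} → G for n ≥ 0. Then there exist functions g_n : G^k → G satisfying f_n(u_0, u_1, …, u_k) * u_0^{-1} = g_n(u_0 * u_1^{-1}, u_1 * u_2^{-1}, …, u_{k−1} * u_k^{-1}) for all u_0,…,u_k ∈ G and all n (the inversion form symmetry) if and only if every f_n is homogeneous of degree one relative to G, i.e. f_n(u_0 * t, u_1 * t, …, u_k * t) = f_n(u_0, …, u_k) * t for all t, u_0, …, u_k ∈ G and all n. -/
private lemma tele_prod {G : Type*} [Group G] (w : ℕ → G) :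
    ∀ n m : ℕ, ((List.range' m n).map (fun j => w j * (w (j+1))⁻¹)).prod
      = w m * (w (m + n))⁻¹ := by
  intro n
  induction n with
  | zero => intro m; simp
  | succ n ih =>
    intro m
    rw [List.range'_succ, List.map_cons, List.prod_cons, ih (m+1)]
    have : m + 1 + n = m + (n + 1) := by omega
    rw [this]
    group

/-- The difference equation with functions `f_n` has the inversion form
symmetry (i.e. there exist `g_n` with
`f_n(u_0,…,u_k) * u_0⁻¹ = g_n(u_0 * u_1⁻¹, …, u_{k-1} * u_k⁻¹)` for all arguments and
all `n`) if and only if every `f_n` is homogeneous of degree one relative to `G`. -/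
theorem stmt_7 {G : Type*} [Group G] (k : ℕ) (hk : 1 ≤ k)
    (f : ℕ → (Fin (k + 1) → G) → G) :
    (∃ g : ℕ → (Fin k → G) → G, ∀ (n : ℕ) (u : Fin (k + 1) → G),
        f n u * (u 0)⁻¹ = g n (fun j => u j.castSucc * (u j.succ)⁻¹))
    ↔ ∀ (n : ℕ) (t : G) (u : Fin (k + 1) → G),
        f n (fun i => u i * t) = f n u * t := by
  constructor
  · rintro ⟨g, hg⟩ n t u
    have h1 := hg n (fun i => u i * t)
    have h2 := hg n u
    have hdiff : (fun j : Fin k => (u j.castSucc * t) * (u j.succ * t)⁻¹)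
        = fun j => u j.castSucc * (u j.succ)⁻¹ := by
      funext j; group
    rw [hdiff, ← h2] at h1
    have : f n (fun i => u i * t) = f n u * (u 0)⁻¹ * (u 0 * t) := by
      rw [← h1]; group
    rw [this]; group
  · intro hf
    refine ⟨fun n v =>
      (fun W : Fin (k+1) → G => f n W * (W 0)⁻¹)
        (fun i => ((List.range' i.val (k - i.val)).map
          (fun j => if h : j < k then v ⟨j, h⟩ else 1)).prod), fun n u => ?_⟩
    simp only
    set U : ℕ → G := fun j => if h : j < k + 1 then u ⟨j, h⟩ else 1 with hU
    have key : ∀ i : Fin (k+1),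
        ((List.range' i.val (k - i.val)).map
          (fun j => if h : j < k then
            u (⟨j, h⟩ : Fin k).castSucc * (u (⟨j, h⟩ : Fin k).succ)⁻¹ else 1)).prod
        = u i * (u (Fin.last k))⁻¹ := by
      intro i
      have hmap : ((List.range' i.val (k - i.val)).map
          (fun j => if h : j < k then
            u (⟨j, h⟩ : Fin k).castSucc * (u (⟨j, h⟩ : Fin k).succ)⁻¹ else 1))
        = ((List.range' i.val (k - i.val)).map (fun j => U j * (U (j+1))⁻¹)) := by
        apply List.map_congr_left
        intro j hj
        rw [List.mem_range'_1] at hj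
        have hjk : j < k := by omega
        simp only [hjk, dif_pos, hU]
        have h1 : j < k + 1 := by omega
        have h2 : j + 1 < k + 1 := by omega
        simp only [h1, h2, dif_pos, Fin.castSucc_mk, Fin.succ_mk]
      rw [hmap, tele_prod]
      have hik : i.val ≤ k := by omega
      have : i.val + (k - i.val) = k := by omega
      rw [this, hU]
      simp only [i.isLt, dif_pos, Nat.lt_succ_self, Fin.eta, Fin.last]
    have hW : (fun i : Fin (k+1) => ((List.range' i.val (k - i.val)).map
          (fun j => if h : j < k then
            u (⟨j, h⟩ : Fin k).castSucc * (u (⟨j, h⟩ : Fin k).succ)⁻¹ else 1)).prod)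
        = fun i => u i * (u (Fin.last k))⁻¹ := funext key
    rw [hW, key 0, hf n ((u (Fin.last k))⁻¹) u]
    simp [Fin.val_zero]
end

section
/- Let (G,*) be a group, k ≥ 1, and suppose each f_n : G^{k+1} → G is homogeneous of degree one relative to G, i.e. f_n(u_0 * t, …, u_k * t) = f_n(u_0,…,u_k) * t for all t, u_0,…,u_k ∈ G. If {x_n}_{n ≥ −k} is a solution of x_{n+1} = f_n(x_n, x_{n−1}, …, x_{n−k}) and t_n := x_n * x_{n−1}^{-1} for n ≥ −k+1, then for every n ≥ 0 both t_{n+1} = f_n(1, t_n^{-1}, (t_n * t_{n−1})^{-1}, (t_n * t_{n−1} * t_{n−2})^{-1}, …, (t_n * t_{n−1} * ⋯ * t_{n−k+1})^{-1}) and x_{n+1} = t_{n+1} * x_n hold (where 1 denotes the identity element of G). -/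
/-- If every `f_n` is homogeneous of degree one relative to the group
`G` and `x` is a solution of `x_{n+1} = f_n(x_n, …, x_{n-k})`, then with
`t_n = x_n * x_{n-1}⁻¹` the factor equation
`t_{n+1} = f_n(1, t_n⁻¹, (t_n t_{n-1})⁻¹, …, (t_n ⋯ t_{n-k+1})⁻¹)` and the cofactor
equation `x_{n+1} = t_{n+1} * x_n` hold for every `n ≥ 0`. -/
theorem stmt_8 {G : Type*} [Group G] (k : ℕ) (hk : 1 ≤ k)
    (f : ℕ → (Fin (k + 1) → G) → G)
    (hhd1 : ∀ (n : ℕ) (t : G) (u : Fin (k + 1) → G), f n (fun i => u i * t) = f n u * t)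
    (x : ℤ → G)
    (hx : ∀ n : ℕ, x ((n : ℤ) + 1) = f n (fun i => x ((n : ℤ) - i.val)))
    (t : ℤ → G)
    (ht : ∀ n : ℤ, -(k : ℤ) + 1 ≤ n → t n = x n * (x (n - 1))⁻¹) :
    ∀ n : ℕ,
      t ((n : ℤ) + 1) =
        f n (fun i => (((List.range i.val).map fun j => t ((n : ℤ) - j)).prod)⁻¹) ∧
      x ((n : ℤ) + 1) = t ((n : ℤ) + 1) * x (n : ℤ) := by
  intro n
  -- telescoping product
  have hprod : ∀ i : ℕ, i ≤ k →
      ((List.range i).map fun j => t ((n : ℤ) - j)).prod = x n * (x ((n : ℤ) - i))⁻¹ := by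
    intro i hi
    simp only [bind_pure_comp, List.map_eq_map, List.map_map]
    induction i with
    | zero => simp
    | succ m ih =>
      have hm : m ≤ k := Nat.le_of_succ_le hi
      have htm : t ((n : ℤ) - m) = x ((n : ℤ) - m) * (x ((n : ℤ) - m - 1))⁻¹ := by
        apply ht
        have : (m : ℤ) ≤ (k : ℤ) - 1 := by
          have : (m : ℤ) + 1 ≤ (k : ℤ) := by exact_mod_cast hi
          linarith
        have hn0 : (0 : ℤ) ≤ (n : ℤ) := Int.ofNat_nonneg n
        linarith
      simp only [List.range_succ, List.map_append, List.prod_append, List.map_cons,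
        List.map_nil, List.prod_cons, List.prod_nil, mul_one, Function.comp, List.map_eq_map, List.map_map] at *
      rw [ih hm, htm]
      have : (n : ℤ) - m - 1 = (n : ℤ) - (m + 1 : ℕ) := by push_cast; ring
      rw [this]
      group
  -- the key computation
  have hkey : x ((n : ℤ) + 1) =
      f n (fun i => (((List.range i.val).map fun j => t ((n : ℤ) - j)).prod)⁻¹) * x n := by
    rw [hx n]
    have := hhd1 n (x n) (fun i => (((List.range i.val).map fun j => t ((n : ℤ) - j)).prod)⁻¹)
    rw [← this]
    congr 1
    funext i
    have hi : i.val ≤ k := Nat.lt_succ_iff.mp i.isLt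
    rw [hprod i.val hi]
    group
  have ht1 : t ((n : ℤ) + 1) = x ((n : ℤ) + 1) * (x ((n : ℤ) + 1 - 1))⁻¹ := by
    apply ht
    have hn0 : (0 : ℤ) ≤ (n : ℤ) := Int.ofNat_nonneg n
    have : (1 : ℤ) ≤ (k : ℤ) := by exact_mod_cast hk
    linarith
  simp only [add_sub_cancel_right] at ht1
  constructor
  · rw [ht1, hkey]; group
  · rw [ht1]; group
end

section
/- Let F be a field, k ≥ 1, α ∈ F with α ≠ 0, and f_n : F^{k+1} → F for n ≥ 0. For u_0, v_1, …, v_k ∈ F define ζ_0 = u_0 and ζ_j = u_0/α^j − Σ_{i=1}^{j} v_i/α^{j−i+1} for j = 1,…,k. Then there exist functions g_n : F^k → F satisfying f_n(u_0, u_1, …, u_k) − α u_0 = g_n(u_0 − α u_1, u_1 − α u_2, …, u_{k−1} − α u_k) for all u_0,…,u_k ∈ F and all n (i.e. the equation x_{n+1} = f_n(x_n,…,x_{n−k}) has the linear form symmetry with parameter α), if and only if for every n and all v_1,…,v_k ∈ F the quantity f_n(u_0, ζ_1, …, ζ_k) − α u_0 is independent of u_0. -/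
noncomputable def zeta10 {F : Type*} [Field F] (k : ℕ) (α u0 : F) (v : ℕ → F) :
    Fin (k + 1) → F :=
  fun i => u0 / α ^ i.val - ∑ l ∈ Finset.range i.val, v (l + 1) / α ^ (i.val - l)

lemma zeta10_rec {F : Type*} [Field F] (k : ℕ) (α : F) (hα : α ≠ 0) (u0 : F)
    (v : ℕ → F) (j : Fin k) :
    zeta10 k α u0 v j.castSucc - α * zeta10 k α u0 v j.succ = v (j.val + 1) := by
  simp only [zeta10, Fin.coe_castSucc, Fin.val_succ, Finset.sum_range_succ]
  have h1 : α * (u0 / α ^ (j.val + 1)) = u0 / α ^ j.val := by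
    rw [pow_succ]; field_simp
  have h2 : α * ∑ l ∈ Finset.range j.val, v (l + 1) / α ^ (j.val + 1 - l)
      = ∑ l ∈ Finset.range j.val, v (l + 1) / α ^ (j.val - l) := by
    rw [Finset.mul_sum]
    refine Finset.sum_congr rfl fun l hl => ?_
    simp only [Finset.mem_range] at hl
    rw [show j.val + 1 - l = (j.val - l) + 1 by omega, pow_succ]
    field_simp
  have h3 : j.val + 1 - j.val = 1 := by omega
  rw [mul_sub, mul_add, h1, h2, h3, pow_one, mul_div_cancel₀ _ hα]
  ring

lemma zeta10_eq {F : Type*} [Field F] (k : ℕ) (α : F) (hα : α ≠ 0)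
    (u : Fin (k + 1) → F) (v : ℕ → F)
    (hv : ∀ j : Fin k, v (j.val + 1) = u j.castSucc - α * u j.succ) :
    ∀ m (hm : m < k + 1), u ⟨m, hm⟩ = zeta10 k α (u 0) v ⟨m, hm⟩ := by
  intro m
  induction m with
  | zero => intro hm; simp [zeta10]
  | succ m ih =>
    intro hm
    have hmk : m < k := by omega
    set j : Fin k := ⟨m, hmk⟩ with hj
    have hcast : j.castSucc = ⟨m, by omega⟩ := rfl
    have hsucc : j.succ = ⟨m + 1, hm⟩ := rfl
    have hrec := zeta10_rec k α hα (u 0) v j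
    have hv' := hv j
    rw [hcast, hsucc] at hrec hv'
    have hzj : j.val = m := rfl
    rw [hzj] at hrec hv'
    have := ih (by omega)
    -- combine: u⟨m⟩ - α u⟨m+1⟩ = zeta⟨m⟩ - α zeta⟨m+1⟩ and u⟨m⟩ = zeta⟨m⟩
    have hmain : α * u ⟨m + 1, hm⟩ = α * zeta10 k α (u 0) v ⟨m + 1, hm⟩ := by
      have : u ⟨m, by omega⟩ = zeta10 k α (u 0) v ⟨m, by omega⟩ := ih (by omega)
      linear_combination hrec + hv' + this
    exact mul_left_cancel₀ hα hmain



/-- For a field `F` and `α ≠ 0`, the difference equation with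
functions `f_n` has the linear form symmetry with parameter `α` (i.e. there exist `g_n`
with `f_n(u_0,…,u_k) - α u_0 = g_n(u_0 - α u_1, …, u_{k-1} - α u_k)` for all arguments
and all `n`) if and only if, with `ζ_0 = u_0` and
`ζ_j = u_0/α^j - ∑_{i=1}^{j} v_i/α^{j-i+1}`, the quantity
`f_n(u_0, ζ_1, …, ζ_k) - α u_0` is independent of `u_0`. -/
theorem stmt_10 {F : Type*} [Field F] (k : ℕ) (hk : 1 ≤ k)
    (α : F) (hα : α ≠ 0)
    (f : ℕ → (Fin (k + 1) → F) → F) :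
    (∃ g : ℕ → (Fin k → F) → F, ∀ (n : ℕ) (u : Fin (k + 1) → F),
        f n u - α * u 0 = g n (fun j => u j.castSucc - α * u j.succ))
    ↔ ∀ (n : ℕ) (v : ℕ → F) (u0 u0' : F),
        f n (fun i => u0 / α ^ i.val -
            ∑ l ∈ Finset.range i.val, v (l + 1) / α ^ (i.val - l)) - α * u0 =
        f n (fun i => u0' / α ^ i.val -
            ∑ l ∈ Finset.range i.val, v (l + 1) / α ^ (i.val - l)) - α * u0' := by
  constructor
  · rintro ⟨g, hg⟩ n v u0 u0'
    have key : ∀ w0 : F,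
        f n (zeta10 k α w0 v) - α * w0 = g n (fun j => v (j.val + 1)) := by
      intro w0
      have h0 : zeta10 k α w0 v 0 = w0 := by simp [zeta10]
      have := hg n (zeta10 k α w0 v)
      rw [h0] at this
      rw [this]
      congr 1
      funext j
      exact zeta10_rec k α hα w0 v j
    exact (key u0).trans (key u0').symm
  · intro h
    refine ⟨fun n w => f n (zeta10 k α 0
        (fun m => if hm : m - 1 < k then w ⟨m - 1, hm⟩ else 0)), fun n u => ?_⟩
    set v : ℕ → F := fun m => if hm : m - 1 < k then
        (u (⟨m - 1, hm⟩ : Fin k).castSucc - α * u (⟨m - 1, hm⟩ : Fin k).succ) else 0 with hvdef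
    have hv : ∀ j : Fin k, v (j.val + 1) = u j.castSucc - α * u j.succ := by
      intro j
      simp only [hvdef, Nat.add_sub_cancel, j.isLt, dif_pos]
    have hu : u = zeta10 k α (u 0) v := by
      funext i
      have := zeta10_eq k α hα u v hv i.val i.isLt
      simpa using this
    have heq := h n v (u 0) 0
    calc f n u - α * u 0 = f n (zeta10 k α (u 0) v) - α * u 0 := by rw [← hu]
      _ = f n (zeta10 k α 0 v) - α * 0 := heq
      _ = f n (zeta10 k α 0 (fun m => if hm : m - 1 < k then
            (u (⟨m - 1, hm⟩ : Fin k).castSucc - α * u (⟨m - 1, hm⟩ : Fin k).succ) else 0)) := by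
          rw [hvdef]; ring
end

section
/- Let F be a field, k ≥ 1, 0 ≤ j ≤ k, a, c ∈ F with c ≠ 0, and g_n : F → F for n ≥ 0. Suppose there is α ∈ F with a = α^{j+1} and c = −α^k. If {x_n}_{n ≥ −k} is a solution of x_{n+1} = a x_{n−j} + g_n(x_n + c x_{n−k}) and t_n := x_n − α x_{n−1} for n ≥ −k+1, then for every n ≥ 0 both t_{n+1} = −Σ_{i=1}^{j} α^i t_{n−i+1} + g_n( Σ_{i=1}^{k} α^{i−1} t_{n−i+1} ) and x_{n+1} = t_{n+1} + α x_n hold. -/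
/-- Suppose `a = α^{j+1}` and `c = -α^k` (with `c ≠ 0`). If `x` is a
solution of `x_{n+1} = a x_{n-j} + g_n(x_n + c x_{n-k})` and `t_n = x_n - α x_{n-1}`,
then for every `n ≥ 0` both
`t_{n+1} = -∑_{i=1}^{j} α^i t_{n-i+1} + g_n(∑_{i=1}^{k} α^{i-1} t_{n-i+1})` and
`x_{n+1} = t_{n+1} + α x_n` hold. -/
theorem stmt_11 {F : Type*} [Field F] (k j : ℕ) (hk : 1 ≤ k) (hjk : j ≤ k)
    (a c α : F) (hc : c ≠ 0) (ha : a = α ^ (j + 1)) (hcα : c = -α ^ k)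
    (g : ℕ → F → F)
    (x : ℤ → F)
    (hx : ∀ n : ℕ,
      x ((n : ℤ) + 1) = a * x ((n : ℤ) - j) + g n (x (n : ℤ) + c * x ((n : ℤ) - k)))
    (t : ℤ → F)
    (ht : ∀ n : ℤ, -(k : ℤ) + 1 ≤ n → t n = x n - α * x (n - 1)) :
    ∀ n : ℕ,
      t ((n : ℤ) + 1) = -(∑ i ∈ Finset.range j, α ^ (i + 1) * t ((n : ℤ) - i)) +
          g n (∑ i ∈ Finset.range k, α ^ i * t ((n : ℤ) - i)) ∧
      x ((n : ℤ) + 1) = t ((n : ℤ) + 1) + α * x (n : ℤ) := by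
  have key : ∀ m : ℕ, m ≤ k → ∀ n : ℕ,
      ∑ i ∈ Finset.range m, α ^ i * t ((n : ℤ) - i) = x n - α ^ m * x ((n : ℤ) - m) := by
    intro m hm n
    induction m with
    | zero => simp
    | succ m ih =>
      rw [Finset.sum_range_succ, ih (le_trans (Nat.le_succ m) hm)]
      rw [ht ((n : ℤ) - m) (by push_cast; omega)]
      have : (n : ℤ) - m - 1 = (n : ℤ) - (m + 1) := by push_cast; ring
      rw [this]
      push_cast
      ring
  intro n
  have htn1 : t ((n : ℤ) + 1) = x ((n : ℤ) + 1) - α * x n := by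
    have := ht ((n : ℤ) + 1) (by push_cast; omega)
    simpa using this
  constructor
  · have hj : ∑ i ∈ Finset.range j, α ^ (i + 1) * t ((n : ℤ) - i)
        = α * (x n - α ^ j * x ((n : ℤ) - j)) := by
      rw [← key j hjk n, Finset.mul_sum]
      exact Finset.sum_congr rfl fun i _ => by ring
    rw [htn1, hx n, key k le_rfl n, hj, ha, hcα]
    ring_nf
  · rw [htn1]; ring
end

section
/- Let k ≥ 1, let α_n ∈ ℂ for n ≥ 0 and φ_0, φ_1, …, φ_k : ℂ → ℂ be given, and suppose there exists c ∈ ℂ such that c^{k+1} z − c^k φ_0(z) − c^{k−1} φ_1(z) − ⋯ − c φ_{k−1}(z) − φ_k(z) = 0 for all z ∈ ℂ. Define h_j : ℂ → ℂ by h_j(z) = c^j z − c^{j−1} φ_0(z) − c^{j−2} φ_1(z) − ⋯ − φ_{j−1}(z) for j = 1,…,k. If {x_n}_{n ≥ −k} is a solution of the additively separable equation x_{n+1} = α_n + φ_0(x_n) + φ_1(x_{n−1}) + ⋯ + φ_k(x_{n−k}) and z_n := x_n + h_1(x_{n−1}) + h_2(x_{n−2}) + ⋯ + h_k(x_{n−k})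 for n ≥ 0, then for every n ≥ 0 both z_{n+1} = α_n + c z_n and x_{n+1} = z_{n+1} − h_1(x_n) − h_2(x_{n−1}) − ⋯ − h_k(x_{n−k+1}) hold. -/
/-- Suppose `c ∈ ℂ` satisfies
`c^{k+1} z - c^k φ_0(z) - c^{k-1} φ_1(z) - ⋯ - φ_k(z) = 0` for all `z`, and let
`h_j(z) = c^j z - c^{j-1} φ_0(z) - ⋯ - φ_{j-1}(z)`. If `x` is a solution of the
additively separable equation `x_{n+1} = α_n + φ_0(x_n) + ⋯ + φ_k(x_{n-k})` and
`z_n = x_n + h_1(x_{n-1}) + ⋯ + h_k(x_{n-k})`, then for every `n ≥ 0` both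
`z_{n+1} = α_n + c z_n` and `x_{n+1} = z_{n+1} - h_1(x_n) - ⋯ - h_k(x_{n-k+1})` hold. -/
theorem stmt_13 (k : ℕ) (hk : 1 ≤ k)
    (α : ℕ → ℂ) (φ : ℕ → ℂ → ℂ) (c : ℂ)
    (hc : ∀ z : ℂ,
      c ^ (k + 1) * z - ∑ i ∈ Finset.range (k + 1), c ^ (k - i) * φ i z = 0)
    (h : ℕ → ℂ → ℂ)
    (hdef : ∀ (j : ℕ) (z : ℂ),
      h j z = c ^ j * z - ∑ i ∈ Finset.range j, c ^ (j - 1 - i) * φ i z)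
    (x : ℤ → ℂ)
    (hx : ∀ n : ℕ,
      x ((n : ℤ) + 1) = α n + ∑ i ∈ Finset.range (k + 1), φ i (x ((n : ℤ) - i)))
    (z : ℤ → ℂ)
    (hz : ∀ n : ℤ, 0 ≤ n → z n = x n + ∑ j ∈ Finset.Icc 1 k, h j (x (n - j))) :
    ∀ n : ℕ,
      z ((n : ℤ) + 1) = α n + c * z (n : ℤ) ∧
      x ((n : ℤ) + 1) =
        z ((n : ℤ) + 1) - ∑ j ∈ Finset.Icc 1 k, h j (x ((n : ℤ) - j + 1)) := by
  have hzero : ∀ w : ℂ, h (k + 1) w = 0 := by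
    intro w
    rw [hdef]
    simpa [Nat.add_sub_cancel] using hc w
  have chj : ∀ (j : ℕ) (w : ℂ), c * h j w = h (j + 1) w + φ j w := by
    intro j w
    rw [hdef, hdef, Finset.sum_range_succ]
    have hsum : ∑ i ∈ Finset.range j, c ^ (j + 1 - 1 - i) * φ i w
        = ∑ i ∈ Finset.range j, c * (c ^ (j - 1 - i) * φ i w) := by
      refine Finset.sum_congr rfl fun i hi => ?_
      have hij : i < j := Finset.mem_range.mp hi
      have he : j + 1 - 1 - i = (j - 1 - i) + 1 := by omega
      rw [he, pow_succ]; ring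
    rw [hsum, ← Finset.mul_sum]
    have he0 : j + 1 - 1 - j = 0 := by omega
    rw [he0, pow_succ]; ring
  have h0 : ∀ w : ℂ, h 0 w = w := by intro w; simp [hdef]
  intro n
  have hz1 : z ((n : ℤ) + 1)
      = x ((n : ℤ) + 1) + ∑ j ∈ Finset.Icc 1 k, h j (x ((n : ℤ) - j + 1)) := by
    rw [hz ((n : ℤ) + 1) (by positivity)]
    congr 1
    refine Finset.sum_congr rfl fun j _ => ?_
    congr 2
    ring
  refine ⟨?_, by rw [hz1]; exact (add_sub_cancel_right _ _).symm⟩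
  obtain ⟨m, rfl⟩ : ∃ m, k = m + 1 := ⟨k - 1, by omega⟩
  rw [hz1, hz n (by positivity), hx n]
  -- rewrite RHS using chj
  rw [mul_add, Finset.mul_sum]
  have hcx : c * x (n : ℤ) = h 1 (x (n : ℤ)) + φ 0 (x (n : ℤ)) := by
    have := chj 0 (x (n : ℤ)); rwa [h0] at this
  rw [hcx]
  have hhsum : ∑ j ∈ Finset.Icc 1 (m + 1), c * h j (x ((n : ℤ) - j))
      = ∑ j ∈ Finset.Icc 1 (m + 1),
          (h (j + 1) (x ((n : ℤ) - j)) + φ j (x ((n : ℤ) - j))) := by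
    exact Finset.sum_congr rfl fun j _ => chj j _
  rw [hhsum, Finset.sum_add_distrib]
  -- now compare the φ parts and the h parts separately
  have hIcc : ∀ f : ℕ → ℂ, ∑ j ∈ Finset.Icc 1 (m + 1), f j
      = ∑ i ∈ Finset.range (m + 1), f (i + 1) := by
    intro f
    rw [← Finset.Ico_add_one_right_eq_Icc, Finset.sum_Ico_eq_sum_range]
    simp [Nat.add_comm]
  have hφ : ∑ i ∈ Finset.range (m + 1 + 1), φ i (x ((n : ℤ) - i))
      = φ 0 (x (n : ℤ)) + ∑ j ∈ Finset.Icc 1 (m + 1), φ j (x ((n : ℤ) - j)) := by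
    rw [Finset.sum_range_succ' (fun i => φ i (x ((n : ℤ) - i))) (m + 1), hIcc]
    simp only [Nat.cast_zero, sub_zero]
    rw [add_comm]
  have hh : ∑ j ∈ Finset.Icc 1 (m + 1), h j (x ((n : ℤ) - j + 1))
      = h 1 (x (n : ℤ)) + ∑ j ∈ Finset.Icc 1 (m + 1), h (j + 1) (x ((n : ℤ) - j)) := by
    rw [hIcc, hIcc]
    rw [Finset.sum_range_succ' (fun i => h (i + 1) (x ((n : ℤ) - (i + 1 : ℕ) + 1))) m]
    rw [Finset.sum_range_succ (fun i => h (i + 1 + 1) (x ((n : ℤ) - (i + 1 : ℕ))))]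
    rw [hzero, add_zero]
    have h1arg : (n : ℤ) - ((0 : ℕ) + 1 : ℕ) + 1 = (n : ℤ) := by push_cast; ring
    rw [h1arg, add_comm]
    congr 1
    refine Finset.sum_congr rfl fun i _ => ?_
    congr 2
    push_cast; ring
  rw [hφ, hh]
  ring
end

section
/- Let k ≥ 1, let β_n > 0 for n ≥ 0 and ψ_0, ψ_1, …, ψ_k : (0,∞) → (0,∞) be given, and suppose there exists c ∈ ℝ such that ψ_0(t)^{c^k} ψ_1(t)^{c^{k−1}} ⋯ ψ_{k−1}(t)^{c} ψ_k(t) = t^{c^{k+1}} for all t > 0. Define h_j : (0,∞) → (0,∞) by h_j(t) = t^{c^j} ψ_0(t)^{−c^{j−1}} ψ_1(t)^{−c^{j−2}} ⋯ ψ_{j−1}(t)^{−1} for j = 1,…,k. If {y_n}_{n ≥ −k} is a positive solution of the multiplicatively separable equation y_{n+1} = β_n ψ_0(y_n) ψ_1(y_{n−1}) ⋯ ψ_k(y_{n−k}) and r_n := y_n h_1(y_{n−1}) h_2(y_{n−2}) ⋯ h_k(y_{n−k}) for n ≥ 0, then for every n ≥ 0 both r_{n+1} = β_n r_n^c and y_{n+1}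 = r_{n+1} / (h_1(y_n) h_2(y_{n−1}) ⋯ h_k(y_{n−k+1})) hold. -/
lemma stmt15_aux_Icc {M : Type*} [CommMonoid M] (k : ℕ) (f : ℕ → M) :
    ∏ j ∈ Finset.Icc 1 k, f j = ∏ i ∈ Finset.range k, f (i + 1) := by
  rw [← Finset.Ico_add_one_right_eq_Icc, Finset.prod_Ico_eq_prod_range]
  simp [add_comm]

/-- Suppose `c ∈ ℝ` satisfies
`ψ_0(t)^{c^k} ψ_1(t)^{c^{k-1}} ⋯ ψ_k(t) = t^{c^{k+1}}` for all `t > 0`, and let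
`h_j(t) = t^{c^j} ψ_0(t)^{-c^{j-1}} ⋯ ψ_{j-1}(t)^{-1}`. If `y` is a positive solution of
the multiplicatively separable equation `y_{n+1} = β_n ψ_0(y_n) ⋯ ψ_k(y_{n-k})` and
`r_n = y_n h_1(y_{n-1}) ⋯ h_k(y_{n-k})`, then for every `n ≥ 0` both
`r_{n+1} = β_n r_n^c` and `y_{n+1} = r_{n+1}/(h_1(y_n) ⋯ h_k(y_{n-k+1}))` hold. -/
theorem stmt_15 (k : ℕ) (hk : 1 ≤ k)
    (β : ℕ → ℝ) (hβ : ∀ n, 0 < β n)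
    (ψ : ℕ → ℝ → ℝ) (hψ : ∀ i ≤ k, ∀ t : ℝ, 0 < t → 0 < ψ i t)
    (c : ℝ)
    (hc : ∀ t : ℝ, 0 < t →
      (∏ i ∈ Finset.range (k + 1), ψ i t ^ (c ^ (k - i))) = t ^ (c ^ (k + 1)))
    (h : ℕ → ℝ → ℝ)
    (hdef : ∀ (j : ℕ) (t : ℝ),
      h j t = t ^ (c ^ j) * ∏ i ∈ Finset.range j, ψ i t ^ (-(c ^ (j - 1 - i))))
    (y : ℤ → ℝ) (hy0 : ∀ n : ℤ, -(k : ℤ) ≤ n → 0 < y n)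
    (hy : ∀ n : ℕ,
      y ((n : ℤ) + 1) = β n * ∏ i ∈ Finset.range (k + 1), ψ i (y ((n : ℤ) - i)))
    (r : ℤ → ℝ)
    (hr : ∀ n : ℤ, 0 ≤ n → r n = y n * ∏ j ∈ Finset.Icc 1 k, h j (y (n - j))) :
    ∀ n : ℕ,
      r ((n : ℤ) + 1) = β n * r (n : ℤ) ^ c ∧
      y ((n : ℤ) + 1) =
        r ((n : ℤ) + 1) / ∏ j ∈ Finset.Icc 1 k, h j (y ((n : ℤ) - j + 1)) := by
  -- positivity of h j t
  have hhpos : ∀ j ≤ k, ∀ t : ℝ, 0 < t → 0 < h j t := by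
    intro j hj t ht
    rw [hdef]
    refine mul_pos (Real.rpow_pos_of_pos ht _) (Finset.prod_pos fun i hi => ?_)
    exact Real.rpow_pos_of_pos (hψ i (le_trans (Finset.mem_range.mp hi).le hj) t ht) _
  -- key formula for h j t ^ c
  have hkey : ∀ j ≤ k, ∀ t : ℝ, 0 < t →
      h j t ^ c = t ^ (c ^ (j + 1)) *
        ∏ i ∈ Finset.range j, ψ i t ^ (-(c ^ (j - i))) := by
    intro j hj t ht
    have hψt : ∀ i < j, 0 < ψ i t := fun i hi => hψ i (le_trans hi.le hj) t ht
    rw [hdef, Real.mul_rpow (Real.rpow_pos_of_pos ht _).le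
      (Finset.prod_nonneg fun i hi =>
        (Real.rpow_pos_of_pos (hψt i (Finset.mem_range.mp hi)) _).le),
      ← Real.rpow_mul ht.le, ← pow_succ,
      ← Real.finset_prod_rpow _ _ (fun i hi =>
        (Real.rpow_pos_of_pos (hψt i (Finset.mem_range.mp hi)) _).le)]
    congr 1
    refine Finset.prod_congr rfl fun i hi => ?_
    have hi' := Finset.mem_range.mp hi
    rw [← Real.rpow_mul (hψt i hi').le]
    congr 1
    have hnum : j - 1 - i + 1 = j - i := by omega
    rw [neg_mul, ← pow_succ, hnum]
  -- step formula: h j t ^ c = h (j+1) t * ψ j t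
  have hB : ∀ j ≤ k, ∀ t : ℝ, 0 < t → h j t ^ c = h (j + 1) t * ψ j t := by
    intro j hj t ht
    have hψj : (ψ j t) ≠ 0 := (hψ j hj t ht).ne'
    rw [hkey j hj t ht, hdef (j + 1)]
    simp only [Nat.add_sub_cancel]
    rw [Finset.prod_range_succ, Nat.sub_self, pow_zero, Real.rpow_neg_one]
    field_simp
  -- top formula: h k t ^ c = ψ k t
  have hC : ∀ t : ℝ, 0 < t → h k t ^ c = ψ k t := by
    intro t ht
    have hψt : ∀ i ≤ k, 0 < ψ i t := fun i hi => hψ i hi t ht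
    rw [hkey k le_rfl t ht, ← hc t ht, Finset.prod_range_succ, Nat.sub_self, pow_zero,
      Real.rpow_one]
    rw [mul_comm (∏ i ∈ Finset.range k, ψ i t ^ c ^ (k - i)) (ψ k t), mul_assoc,
      ← Finset.prod_mul_distrib]
    have hone : ∀ i ∈ Finset.range k,
        ψ i t ^ (c ^ (k - i)) * ψ i t ^ (-(c ^ (k - i))) = 1 := by
      intro i hi
      rw [← Real.rpow_add (hψt i (Finset.mem_range.mp hi).le), add_neg_cancel,
        Real.rpow_zero]
    rw [Finset.prod_congr rfl hone, Finset.prod_const_one, mul_one]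
  intro n
  obtain ⟨m, rfl⟩ : ∃ m, k = m + 1 := ⟨k - 1, by omega⟩
  -- positivity of the relevant y's
  have hypos : ∀ i : ℕ, i ≤ m + 1 → 0 < y ((n : ℤ) - i) := by
    intro i hi
    refine hy0 _ ?_
    have h1 : (i : ℤ) ≤ ((m : ℤ) + 1) := by exact_mod_cast hi
    omega
  have hyn : 0 < y (n : ℤ) := by simpa using hypos 0 (by omega)
  -- r (n+1) expression
  have hr1 : r ((n : ℤ) + 1) =
      y ((n : ℤ) + 1) * ∏ j ∈ Finset.Icc 1 (m + 1), h j (y ((n : ℤ) - j + 1)) := by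
    rw [hr ((n : ℤ) + 1) (by positivity)]
    congr 1
    refine Finset.prod_congr rfl fun j _ => ?_
    congr 1
    ring_nf
  -- the product of h's at shifted points, reindexed
  have hH : ∏ j ∈ Finset.Icc 1 (m + 1), h j (y ((n : ℤ) - j + 1)) =
      h 1 (y (n : ℤ)) *
        ∏ i ∈ Finset.range m, h (i + 2) (y ((n : ℤ) - ((i + 1 : ℕ) : ℤ))) := by
    rw [stmt15_aux_Icc]
    have e : ∀ i ∈ Finset.range (m + 1),
        h (i + 1) (y ((n : ℤ) - (↑(i + 1) : ℤ) + 1)) = h (i + 1) (y ((n : ℤ) - (i : ℕ))) := by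
      intro i _
      congr 2
      push_cast
      ring
    rw [Finset.prod_congr rfl e, Finset.prod_range_succ']
    simp only [Nat.cast_zero, sub_zero]
    ring
  -- the product in the recurrence, reindexed
  have hΨ : (∏ i ∈ Finset.range (m + 1 + 1), ψ i (y ((n : ℤ) - i))) =
      ψ 0 (y (n : ℤ)) *
        (∏ i ∈ Finset.range m, ψ (i + 1) (y ((n : ℤ) - ((i + 1 : ℕ) : ℤ)))) *
        ψ (m + 1) (y ((n : ℤ) - ((m + 1 : ℕ) : ℤ))) := by
    rw [Finset.prod_range_succ, Finset.prod_range_succ']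
    simp only [Nat.cast_zero, sub_zero]
    ring
  -- r n ^ c expansion
  have hP : ∀ j ∈ Finset.Icc 1 (m + 1), 0 < h j (y ((n : ℤ) - j)) := by
    intro j hj
    have hj' := (Finset.mem_Icc.mp hj).2
    exact hhpos j hj' _ (hypos j hj')
  have h1eq : (y (n : ℤ)) ^ c = h 1 (y (n : ℤ)) * ψ 0 (y (n : ℤ)) := by
    have hψ0 : (ψ 0 (y (n : ℤ))) ≠ 0 := (hψ 0 (by omega) _ hyn).ne'
    rw [hdef 1, Finset.prod_range_one]
    norm_num [Real.rpow_neg_one, pow_one]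
    field_simp
  have e1 : r (n : ℤ) ^ c =
      (h 1 (y (n : ℤ)) * ψ 0 (y (n : ℤ))) *
        ((∏ i ∈ Finset.range m,
            (h (i + 2) (y ((n : ℤ) - ((i + 1 : ℕ) : ℤ))) *
              ψ (i + 1) (y ((n : ℤ) - ((i + 1 : ℕ) : ℤ))))) *
          ψ (m + 1) (y ((n : ℤ) - ((m + 1 : ℕ) : ℤ)))) := by
    rw [hr (n : ℤ) (by positivity),
      Real.mul_rpow hyn.le (Finset.prod_nonneg fun j hj => (hP j hj).le),
      ← Real.finset_prod_rpow _ _ (fun j hj => (hP j hj).le), h1eq]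
    congr 1
    rw [stmt15_aux_Icc, Finset.prod_range_succ]
    congr 1
    · refine Finset.prod_congr rfl fun i hi => ?_
      have hi' := Finset.mem_range.mp hi
      exact hB (i + 1) (by omega) _ (hypos (i + 1) (by omega))
    · exact hC _ (hypos (m + 1) le_rfl)
  have main : r ((n : ℤ) + 1) = β n * r (n : ℤ) ^ c := by
    rw [hr1, hy n, hΨ, hH, e1, Finset.prod_mul_distrib]
    ring
  refine ⟨main, ?_⟩
  have hHpos : 0 < ∏ j ∈ Finset.Icc 1 (m + 1), h j (y ((n : ℤ) - j + 1)) := by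
    refine Finset.prod_pos fun j hj => ?_
    have hj' := Finset.mem_Icc.mp hj
    refine hhpos j hj'.2 _ (hy0 _ ?_)
    have : (j : ℤ) ≤ (m : ℤ) + 1 := by exact_mod_cast hj'.2
    have : (1 : ℤ) ≤ (j : ℤ) := by exact_mod_cast hj'.1
    omega
  rw [hr1]
  exact (mul_div_cancel_right₀ _ hHpos.ne').symm
end

section
/- Let a_n, b_n > 0 for n ≥ 0, and let {x_n}_{n ≥ −2} be a positive solution of the third-order rational equation x_{n+1} = x_n x_{n−1} / (a_n x_n + b_n x_{n−2}). Define t_n := x_n / x_{n−1} for n ≥ −1, r_n := t_n t_{n−1} = x_n / x_{n−2} for n ≥ 0, and s_n := 1/r_n for n ≥ 0. Then for every n ≥ 0: (i) t_{n+1} = t_{n−1} / (a_n t_n t_{n−1} + b_n); (ii) r_{n+1} = r_n / (a_n r_n + b_n); (iii) s_{n+1} = a_n + b_n s_n; and consequently the solution satisfies the triangular system s_{n+1} = a_n + b_n s_n, t_{n+1} = 1/(s_{n+1} t_n), x_{n+1} = t_{n+1} x_n. -/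
/-- For a positive solution of
`x_{n+1} = x_n x_{n-1} / (a_n x_n + b_n x_{n-2})` with `a_n, b_n > 0`, the substitutions
`t_n = x_n / x_{n-1}`, `r_n = t_n t_{n-1}` and `s_n = 1/r_n` satisfy
(i) `t_{n+1} = t_{n-1}/(a_n t_n t_{n-1} + b_n)`, (ii) `r_{n+1} = r_n/(a_n r_n + b_n)`,
(iii) `s_{n+1} = a_n + b_n s_n`, and the triangular system
`s_{n+1} = a_n + b_n s_n`, `t_{n+1} = 1/(s_{n+1} t_n)`, `x_{n+1} = t_{n+1} x_n`. -/
theorem stmt_18 (a b : ℕ → ℝ) (ha : ∀ n, 0 < a n) (hb : ∀ n, 0 < b n)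
    (x : ℤ → ℝ) (hx0 : ∀ n : ℤ, -2 ≤ n → 0 < x n)
    (hx : ∀ n : ℕ,
      x ((n : ℤ) + 1) =
        x (n : ℤ) * x ((n : ℤ) - 1) / (a n * x (n : ℤ) + b n * x ((n : ℤ) - 2)))
    (t r s : ℤ → ℝ)
    (ht : ∀ n : ℤ, -1 ≤ n → t n = x n / x (n - 1))
    (hr : ∀ n : ℤ, 0 ≤ n → r n = t n * t (n - 1))
    (hs : ∀ n : ℤ, 0 ≤ n → s n = 1 / r n) :
    ∀ n : ℕ,
      t ((n : ℤ) + 1) = t ((n : ℤ) - 1) / (a n * t (n : ℤ) * t ((n : ℤ) - 1) + b n) ∧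
      r ((n : ℤ) + 1) = r (n : ℤ) / (a n * r (n : ℤ) + b n) ∧
      s ((n : ℤ) + 1) = a n + b n * s (n : ℤ) ∧
      t ((n : ℤ) + 1) = 1 / (s ((n : ℤ) + 1) * t (n : ℤ)) ∧
      x ((n : ℤ) + 1) = t ((n : ℤ) + 1) * x (n : ℤ) := by
  intro n
  have h0 : 0 < x (n:ℤ) := hx0 _ (by omega)
  have h1 : 0 < x ((n:ℤ) - 1) := hx0 _ (by omega)
  have h2 : 0 < x ((n:ℤ) - 2) := hx0 _ (by omega)
  have hd : 0 < a n * x (n:ℤ) + b n * x ((n:ℤ) - 2) := add_pos (mul_pos (ha n) h0) (mul_pos (hb n) h2)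
  have h0' := h0.ne'
  have h1' := h1.ne'
  have h2' := h2.ne'
  have hd' := hd.ne'
  have hxn1 := hx n
  have htn1 : t ((n:ℤ) + 1) = x ((n:ℤ)+1) / x (n:ℤ) := by
    have := ht ((n:ℤ)+1) (by omega); simpa using this
  have htn : t (n:ℤ) = x (n:ℤ) / x ((n:ℤ)-1) := ht _ (by omega)
  have htm : t ((n:ℤ)-1) = x ((n:ℤ)-1) / x ((n:ℤ)-2) := by
    have := ht ((n:ℤ)-1) (by omega)
    rw [this]; ring_nf
  have e1 : t ((n:ℤ)+1) = x ((n:ℤ)-1) / (a n * x (n:ℤ) + b n * x ((n:ℤ)-2)) := by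
    rw [htn1, hxn1]; field_simp
  have e2 : r ((n:ℤ)+1) = x (n:ℤ) / (a n * x (n:ℤ) + b n * x ((n:ℤ)-2)) := by
    have h := hr ((n:ℤ)+1) (by omega)
    simp only [add_sub_cancel_right] at h
    rw [h, e1, htn]; field_simp
  have e3 : r (n:ℤ) = x (n:ℤ) / x ((n:ℤ)-2) := by
    rw [hr _ (by omega), htn, htm]; field_simp
  have e4 : s ((n:ℤ)+1) = (a n * x (n:ℤ) + b n * x ((n:ℤ)-2)) / x (n:ℤ) := by
    rw [hs _ (by omega), e2]; field_simp
  refine ⟨?_, ?_, ?_, ?_, ?_⟩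
  · rw [e1, htn, htm]; field_simp
  · rw [e2, e3]; field_simp
  · rw [e4, hs _ (by omega), e3]; field_simp
  · rw [e1, e4, htn]; field_simp
  · rw [htn1]; field_simp
end

section
/- Let a ∈ ℝ and let {x_n}_{n ≥ −1} be a positive solution of x_{n+1} = x_{n−1} e^{a − x_n − x_{n−1}} with x_{−1}, x_0 > 0. Define r_n := x_n e^{x_{n−1}} / x_{n−1} for n ≥ 0. Then for every n ≥ 0 both r_{n+1} = e^a / r_n and x_{n+1} = r_{n+1} x_n e^{−x_n} hold; consequently r_{n+2} = r_n for all n ≥ 0, and if r_0 ≠ e^{a/2} then the sequence {r_n} is periodic with minimal period 2 (r_1 ≠ r_0). -/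
/-- For a positive solution of `x_{n+1} = x_{n-1} e^{a - x_n - x_{n-1}}`,
the substitution `r_n = x_n e^{x_{n-1}} / x_{n-1}` satisfies `r_{n+1} = e^a / r_n` and
`x_{n+1} = r_{n+1} x_n e^{-x_n}`; consequently `r_{n+2} = r_n` for all `n ≥ 0`, and if
`r_0 ≠ e^{a/2}` then `{r_n}` has minimal period 2, i.e. `r_1 ≠ r_0`. -/
theorem stmt_19 (a : ℝ) (x : ℤ → ℝ) (hx0 : ∀ n : ℤ, -1 ≤ n → 0 < x n)
    (hx : ∀ n : ℕ,
      x ((n : ℤ) + 1) = x ((n : ℤ) - 1) * Real.exp (a - x (n : ℤ) - x ((n : ℤ) - 1)))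
    (r : ℕ → ℝ)
    (hr : ∀ n : ℕ, r n = x (n : ℤ) * Real.exp (x ((n : ℤ) - 1)) / x ((n : ℤ) - 1)) :
    (∀ n : ℕ, r (n + 1) = Real.exp a / r n ∧
      x ((n : ℤ) + 1) = r (n + 1) * x (n : ℤ) * Real.exp (-x (n : ℤ))) ∧
    (∀ n : ℕ, r (n + 2) = r n) ∧
    (r 0 ≠ Real.exp (a / 2) → r 1 ≠ r 0) := by
  have hxpos : ∀ n : ℕ, 0 < x ((n : ℤ) - 1) := fun n => hx0 _ (by omega)
  have hxpos' : ∀ n : ℕ, 0 < x (n : ℤ) := fun n => hx0 _ (by omega)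
  have hrpos : ∀ n : ℕ, 0 < r n := by
    intro n
    rw [hr n]
    have := hxpos n; have := hxpos' n
    positivity
  have key : ∀ n : ℕ, r (n + 1) = Real.exp a / r n := by
    intro n
    have h1 : r (n + 1) = x ((n : ℤ) + 1) * Real.exp (x (n : ℤ)) / x (n : ℤ) := by
      rw [hr (n + 1)]; push_cast; ring_nf
    rw [h1, hx n, hr n]
    have e1 := (hxpos n).ne'
    have e2 := (hxpos' n).ne'
    rw [Real.exp_sub, Real.exp_sub]
    field_simp
  refine ⟨fun n => ⟨key n, ?_⟩, fun n => ?_, fun h0 h1 => ?_⟩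
  · rw [key n, hr n]
    have e1 := (hxpos n).ne'
    have e2 := (hxpos' n).ne'
    rw [hx n, Real.exp_sub, Real.exp_sub, Real.exp_neg]
    field_simp
  · rw [show n + 2 = (n + 1) + 1 from rfl, key (n + 1), key n]
    have := (hrpos n).ne'
    field_simp
  · apply h0
    have h2 : r 0 * r 0 = Real.exp a := by
      have := key 0
      rw [h1] at this
      have hne := (hrpos 0).ne'
      field_simp at this
      linarith [this]
    have : Real.exp a = Real.exp (a / 2) * Real.exp (a / 2) := by
      rw [← Real.exp_add]; ring_nf
    rw [this] at h2
    nlinarith [hrpos 0, Real.exp_pos (a / 2)]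
end
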